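/- Convergence of the robust weighted average consensus algorithm (Theorem 2): Let N : ℕ with N ≥ 1, let G be a connected simple graph on Fin N, let w : Fin N → ℝ with w i > 0 for all i, let ε > 0 satisfy ε * (∑ over j adjacent to i of w j) < 1 for every node i (i.e., 0 < ε < 1 / max_i ∑_{j∈N_i} w_j), and let Ŵ be the modified Perron matrix. Then for every initial state vector x0 : Fin N → ℝ and every node i, the sequence k ↦ ((Ŵ^k).mulVec x0) i converges (as k → ∞, in the sense of Filter.Tendsto along atTop) to the weighted average (∑_{j=1}^{N} w j * x0 j) / (∑_{j=1}^{N} w j). That is, the update rule x_i(k+1) = x_i(k) + ε ∑_{j ∈ N_i} w_j (x_j(k) − x_i(k)) reaches weighted-average consensus asymptotically. -/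

import Mathlib

open Finset Filter

/-- The modified Perron matrix `Ŵ = I − ε (T ⊗ L)` of the robust weighted average consensus
algorithm, so that the update rule `x_i(k+1) = x_i(k) + ε ∑_{j ∈ N_i} w_j (x_j(k) − x_i(k))`
reads `x(k+1) = Ŵ x(k)` in vector form. -/
def modifiedPerron (N : ℕ) (G : SimpleGraph (Fin N)) [DecidableRel G.Adj]
    (w : Fin N → ℝ) (ε : ℝ) : Matrix (Fin N) (Fin N) ℝ :=
  fun i j =>
    if i = j then 1 - ε * ∑ k ∈ G.neighborFinset i, w k
    else if G.Adj i j then ε * w j else 0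

/-!
The modified Perron matrix `Ŵ` is row stochastic and has `w` as a left fixed vector, so each
iterate is an average of the previous one and the weighted sum `w ⬝ᵥ x(k)` is conserved.
Its diagonal is positive and it is positive on the edges of `G`, so for connected `G` every entry
of `Ŵ ^ N` is at least some `δ > 0`. Splitting `Ŵ ^ N` into `δ` times the all-ones matrix plus a
nonnegative remainder with row sums `1 - N δ` shows that `N` steps shrink the spread
`max x - min x` by the factor `1 - N δ < 1`. Since the weighted average `(w ⬝ᵥ x(k)) / ∑ w` lies
between `min x(k)` and `max x(k)`, every coordinate converges to it.
-/

open Matrix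

section Spread

variable {n : Type*} [Fintype n]

noncomputable def spread (v : n → ℝ) : ℝ := (⨆ i, v i) - ⨅ i, v i

lemma sum_mul_le_sum_mul_iSup {c : n → ℝ} (hc : ∀ i, 0 ≤ c i) (v : n → ℝ) :
    ∑ i, c i * v i ≤ (∑ i, c i) * ⨆ i, v i := by
  rw [sum_mul]
  exact sum_le_sum fun i _ =>
    mul_le_mul_of_nonneg_left (le_ciSup (Finite.bddAbove_range v) i) (hc i)

lemma sum_mul_iInf_le_sum_mul {c : n → ℝ} (hc : ∀ i, 0 ≤ c i) (v : n → ℝ) :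
    (∑ i, c i) * ⨅ i, v i ≤ ∑ i, c i * v i := by
  rw [sum_mul]
  exact sum_le_sum fun i _ =>
    mul_le_mul_of_nonneg_left (ciInf_le (Finite.bddBelow_range v) i) (hc i)

lemma iInf_le_dotProduct_div_sum {w : n → ℝ} (hw : ∀ i, 0 ≤ w i) (hw' : 0 < ∑ i, w i)
    (v : n → ℝ) : ⨅ i, v i ≤ (w ⬝ᵥ v) / ∑ i, w i := by
  rw [le_div_iff₀ hw', mul_comm]
  exact sum_mul_iInf_le_sum_mul hw v

lemma dotProduct_div_sum_le_iSup {w : n → ℝ} (hw : ∀ i, 0 ≤ w i) (hw' : 0 < ∑ i, w i)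
    (v : n → ℝ) : (w ⬝ᵥ v) / ∑ i, w i ≤ ⨆ i, v i := by
  rw [div_le_iff₀ hw', mul_comm]
  exact sum_mul_le_sum_mul_iSup hw v

lemma abs_sub_le_spread {v : n → ℝ} {a : ℝ} (ha : ⨅ i, v i ≤ a) (ha' : a ≤ ⨆ i, v i) (i : n) :
    |v i - a| ≤ spread v :=
  abs_sub_le_of_le_of_le (ciInf_le (Finite.bddBelow_range v) i)
    (le_ciSup (Finite.bddAbove_range v) i) ha ha'

lemma spread_nonneg [Nonempty n] (v : n → ℝ) : 0 ≤ spread v :=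
  sub_nonneg.2 (ciInf_le_ciSup (Finite.bddBelow_range v) (Finite.bddAbove_range v))

end Spread

namespace Matrix

variable {n : Type*} [Fintype n] [DecidableEq n] {A : Matrix n n ℝ}

lemma mulVec_apply_le_iSup (hA : A ∈ rowStochastic ℝ n) (v : n → ℝ) (i : n) :
    (A *ᵥ v) i ≤ ⨆ j, v j := by
  have h := sum_mul_le_sum_mul_iSup (fun j => nonneg_of_mem_rowStochastic hA (i := i) (j := j)) v
  rwa [sum_row_of_mem_rowStochastic hA i, one_mul] at h

lemma iInf_le_mulVec_apply (hA : A ∈ rowStochastic ℝ n) (v : n → ℝ) (i : n) :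
    ⨅ j, v j ≤ (A *ᵥ v) i := by
  have h := sum_mul_iInf_le_sum_mul (fun j => nonneg_of_mem_rowStochastic hA (i := i) (j := j)) v
  rwa [sum_row_of_mem_rowStochastic hA i, one_mul] at h

lemma mul_apply_pos {R l m p : Type*} [Fintype m] [Semiring R] [PartialOrder R]
    [IsStrictOrderedRing R] {A : Matrix l m R} {B : Matrix m p R}
    (hA : ∀ i j, 0 ≤ A i j) (hB : ∀ i j, 0 ≤ B i j) {i : l} {k : m} {j : p}
    (hik : 0 < A i k) (hkj : 0 < B k j) : 0 < (A * B) i j :=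
  sum_pos' (fun k' _ => mul_nonneg (hA i k') (hB k' j)) ⟨k, mem_univ k, mul_pos hik hkj⟩

lemma pow_apply_pos_of_walk {G : SimpleGraph n} (hA : A ∈ rowStochastic ℝ n)
    (hdiag : ∀ i, 0 < A i i) (hadj : ∀ i j, G.Adj i j → 0 < A i j) {i j : n}
    (p : G.Walk i j) {k : ℕ} (hk : p.length ≤ k) : 0 < (A ^ k) i j := by
  have hpow : ∀ k, A ^ k ∈ rowStochastic ℝ n := (rowStochastic ℝ n).pow_mem hA
  induction p generalizing k with
  | nil =>
    clear hk
    induction k with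
    | zero => simp
    | succ k ih =>
      rw [pow_succ']
      exact mul_apply_pos (fun _ _ => nonneg_of_mem_rowStochastic hA)
        (fun _ _ => nonneg_of_mem_rowStochastic (hpow k)) (hdiag _) ih
  | cons h q ih =>
    rw [SimpleGraph.Walk.length_cons] at hk
    obtain ⟨k, rfl⟩ : ∃ k', k = k' + 1 := ⟨k - 1, by omega⟩
    rw [pow_succ']
    exact mul_apply_pos (fun _ _ => nonneg_of_mem_rowStochastic hA)
      (fun _ _ => nonneg_of_mem_rowStochastic (hpow k)) (hadj _ _ h) (ih (by omega))

lemma pow_card_apply_pos {G : SimpleGraph n} (hG : G.Connected) (hA : A ∈ rowStochastic ℝ n)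
    (hdiag : ∀ i, 0 < A i i) (hadj : ∀ i j, G.Adj i j → 0 < A i j) (i j : n) :
    0 < (A ^ Fintype.card n) i j :=
  let p := (hG.preconnected i j).some
  pow_apply_pos_of_walk hA hdiag hadj p.bypass p.bypass_isPath.length_lt.le

lemma vecMul_pow_of_vecMul_eq {w : n → ℝ} (hwA : w ᵥ* A = w) (k : ℕ) : w ᵥ* (A ^ k) = w := by
  induction k with
  | zero => simp
  | succ k ih => rw [pow_succ, ← vecMul_vecMul, ih, hwA]

lemma spread_mulVec_le [Nonempty n] (hA : A ∈ rowStochastic ℝ n) (v : n → ℝ) :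
    spread (A *ᵥ v) ≤ spread v :=
  sub_le_sub (ciSup_le (mulVec_apply_le_iSup hA v)) (le_ciInf (iInf_le_mulVec_apply hA v))

lemma spread_mulVec_le_of_le_apply [Nonempty n] (hA : A ∈ rowStochastic ℝ n) {δ : ℝ}
    (hδ : ∀ i j, δ ≤ A i j) (v : n → ℝ) :
    spread (A *ᵥ v) ≤ (1 - Fintype.card n * δ) * spread v := by
  have hB : ∀ i j, 0 ≤ A i j - δ := fun i j => sub_nonneg.2 (hδ i j)
  have hrow : ∀ i, ∑ j, (A i j - δ) = 1 - Fintype.card n * δ := fun i => by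
    simp [sum_sub_distrib, sum_row_of_mem_rowStochastic hA i]
  have hsplit : ∀ i, (A *ᵥ v) i = δ * ∑ j, v j + ∑ j, (A i j - δ) * v j := fun i => by
    simp [mulVec, dotProduct, sub_mul, sum_sub_distrib, mul_sum]
  have hup : ∀ i, (A *ᵥ v) i ≤ δ * ∑ j, v j + (1 - Fintype.card n * δ) * ⨆ j, v j := fun i => by
    rw [hsplit, ← hrow i]
    exact add_le_add_right (sum_mul_le_sum_mul_iSup (hB i) v) _
  have hlow : ∀ i, δ * ∑ j, v j + (1 - Fintype.card n * δ) * ⨅ j, v j ≤ (A *ᵥ v) i := fun i => by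
    rw [hsplit, ← hrow i]
    exact add_le_add_right (sum_mul_iInf_le_sum_mul (hB i) v) _
  have := ciSup_le hup
  have := le_ciInf hlow
  rw [spread, spread, mul_sub]
  linarith

lemma tendsto_spread_pow_mulVec [Nonempty n] (hA : A ∈ rowStochastic ℝ n) {m : ℕ} (hm : 0 < m)
    (hpos : ∀ i j, 0 < (A ^ m) i j) (x : n → ℝ) :
    Tendsto (fun k => spread (A ^ k *ᵥ x)) atTop (nhds 0) := by
  obtain ⟨⟨i₀, j₀⟩, hmin⟩ := Finite.exists_min fun p : n × n => (A ^ m) p.1 p.2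
  set δ := (A ^ m) i₀ j₀
  have hAm := (rowStochastic ℝ n).pow_mem hA m
  have hδ : ∀ i j, δ ≤ (A ^ m) i j := fun i j => hmin (i, j)
  have hr₀ : 0 ≤ 1 - Fintype.card n * δ := by
    have := sum_le_sum fun j (_ : j ∈ univ) => hδ i₀ j
    simp only [sum_const, card_univ, nsmul_eq_mul, sum_row_of_mem_rowStochastic hAm] at this
    linarith
  have hr₁ : 1 - Fintype.card n * δ < 1 := by
    have : (0 : ℝ) < Fintype.card n := by exact_mod_cast Fintype.card_pos
    nlinarith [hpos i₀ j₀]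
  have hanti : Antitone fun k => spread (A ^ k *ᵥ x) := antitone_nat_of_succ_le fun k => by
    simp only [pow_succ', ← mulVec_mulVec]
    exact spread_mulVec_le hA _
  have hgeom : ∀ t, spread (A ^ (m * t) *ᵥ x) ≤ (1 - Fintype.card n * δ) ^ t * spread x := by
    intro t
    induction t with
    | zero => simp
    | succ t ih =>
      rw [show m * (t + 1) = m + m * t by ring, pow_add, ← mulVec_mulVec, pow_succ',
        mul_assoc]
      exact (spread_mulVec_le_of_le_apply hAm hδ _).trans (mul_le_mul_of_nonneg_left ih hr₀)
  refine squeeze_zero (fun k => spread_nonneg _)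
    (fun k => (hanti (Nat.mul_div_le k m)).trans (hgeom (k / m))) ?_
  simpa using ((tendsto_pow_atTop_nhds_zero_of_lt_one hr₀ hr₁).comp
    (Nat.tendsto_div_const_atTop hm.ne')).mul_const (spread x)

theorem tendsto_pow_mulVec_apply (hA : A ∈ rowStochastic ℝ n) {m : ℕ} (hm : 0 < m)
    (hpos : ∀ i j, 0 < (A ^ m) i j) {w : n → ℝ} (hw : ∀ i, 0 ≤ w i) (hw' : 0 < ∑ i, w i)
    (hwA : w ᵥ* A = w) (x : n → ℝ) (i : n) :
    Tendsto (fun k => (A ^ k *ᵥ x) i) atTop (nhds ((w ⬝ᵥ x) / ∑ j, w j)) := by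
  have : Nonempty n := ⟨i⟩
  have hinv (k : ℕ) : w ⬝ᵥ (A ^ k *ᵥ x) = w ⬝ᵥ x := by
    rw [dotProduct_mulVec, vecMul_pow_of_vecMul_eq hwA]
  rw [tendsto_iff_norm_sub_tendsto_zero]
  refine squeeze_zero (fun _ => norm_nonneg _) (fun k => ?_)
    (tendsto_spread_pow_mulVec hA hm hpos x)
  rw [Real.norm_eq_abs, ← hinv k]
  exact abs_sub_le_spread (iInf_le_dotProduct_div_sum hw hw' _)
    (dotProduct_div_sum_le_iSup hw hw' _) i

end Matrix

section ModifiedPerron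

variable {N : ℕ} (G : SimpleGraph (Fin N)) [DecidableRel G.Adj] (w : Fin N → ℝ) (ε : ℝ)

lemma modifiedPerron_apply (i j : Fin N) :
    modifiedPerron N G w ε i j =
      (if i = j then 1 - ε * ∑ k ∈ G.neighborFinset i, w k else 0) +
        if G.Adj i j then ε * w j else 0 := by
  unfold modifiedPerron
  split_ifs <;> simp_all

lemma sum_modifiedPerron_row (i : Fin N) : ∑ j, modifiedPerron N G w ε i j = 1 := by
  simp only [modifiedPerron_apply, sum_add_distrib, sum_ite_eq, mem_univ, if_true, ← sum_filter,
    ← G.neighborFinset_eq_filter, mul_sum]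
  ring

lemma vecMul_modifiedPerron : w ᵥ* modifiedPerron N G w ε = w := by
  ext l
  simp only [vecMul, dotProduct, modifiedPerron_apply, mul_add, mul_ite, mul_zero,
    sum_add_distrib, sum_ite_eq', mem_univ, if_true, G.adj_comm _ l, ← sum_filter,
    ← G.neighborFinset_eq_filter, ← sum_mul]
  ring

lemma modifiedPerron_mem_rowStochastic (hw : ∀ i, 0 ≤ w i) (hε : 0 ≤ ε)
    (hcond : ∀ i, ε * ∑ j ∈ G.neighborFinset i, w j ≤ 1) :
    modifiedPerron N G w ε ∈ rowStochastic ℝ (Fin N) := by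
  refine mem_rowStochastic_iff_sum.2 ⟨fun i j => ?_, sum_modifiedPerron_row G w ε⟩
  rw [modifiedPerron_apply]
  have := hcond i
  have := hw j
  split_ifs <;> positivity

lemma modifiedPerron_apply_self_pos {i : Fin N} (h : ε * ∑ j ∈ G.neighborFinset i, w j < 1) :
    0 < modifiedPerron N G w ε i i := by
  simpa [modifiedPerron] using h

lemma modifiedPerron_apply_pos_of_adj (hε : 0 < ε) {i j : Fin N} (hw : 0 < w j) (h : G.Adj i j) :
    0 < modifiedPerron N G w ε i j := by
  simpa [modifiedPerron, h.ne, h] using mul_pos hε hw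

end ModifiedPerron

theorem modifiedPerron_consensus_convergence_general (N : ℕ)
    (G : SimpleGraph (Fin N)) [DecidableRel G.Adj] (hG : G.Connected)
    (w : Fin N → ℝ) (hw : ∀ i, 0 < w i) (ε : ℝ) (hε : 0 < ε)
    (hcond : ∀ i, ε * ∑ j ∈ G.neighborFinset i, w j < 1) :
    ∀ (x0 : Fin N → ℝ) (i : Fin N),
      Tendsto (fun k : ℕ => (((modifiedPerron N G w ε) ^ k).mulVec x0) i) atTop
        (nhds ((∑ j : Fin N, w j * x0 j) / (∑ j : Fin N, w j))) := by
  intro x0 i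
  have hA := modifiedPerron_mem_rowStochastic G w ε (fun j => (hw j).le) hε.le
    fun j => (hcond j).le
  have hpos := pow_card_apply_pos hG hA (fun j => modifiedPerron_apply_self_pos G w ε (hcond j))
    fun _ k h => modifiedPerron_apply_pos_of_adj G w ε hε (hw k) h
  rw [Fintype.card_fin] at hpos
  exact tendsto_pow_mulVec_apply hA i.pos hpos (fun j => (hw j).le)
    (sum_pos (fun j _ => hw j) ⟨i, mem_univ i⟩) (vecMul_modifiedPerron G w ε) x0 i

/-- **Convergence of the robust weighted average consensus algorithm (Theorem 2).**
If the graph is connected, the weights are positive and `0 < ε` with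
`ε ∑_{j ∈ N_i} w j < 1` for every node `i`, then for every initial state `x0` the iterates
`Ŵ^k x0` converge at every node to the weighted average `(∑ j, w j * x0 j) / (∑ j, w j)`. -/
theorem modifiedPerron_consensus_convergence (N : ℕ) (hN : 1 ≤ N)
    (G : SimpleGraph (Fin N)) [DecidableRel G.Adj] (hG : G.Connected)
    (w : Fin N → ℝ) (hw : ∀ i, 0 < w i) (ε : ℝ) (hε : 0 < ε)
    (hcond : ∀ i, ε * ∑ j ∈ G.neighborFinset i, w j < 1) :
    ∀ (x0 : Fin N → ℝ) (i : Fin N),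
      Tendsto (fun k : ℕ => (((modifiedPerron N G w ε) ^ k).mulVec x0) i) atTop
        (nhds ((∑ j : Fin N, w j * x0 j) / (∑ j : Fin N, w j))) :=
  modifiedPerron_consensus_convergence_general N G hG w hw ε hε hcond
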